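/- arXiv:1108.1303 — 2 statements merged into one kernel-verified Lean document; each statement's English description precedes it below -/
import Mathlib

section
/- Let G be a finite non-abelian group, let p be the smallest prime number dividing the order of G, and let n ≥ 1 be a natural number. Then d_n(G) ≤ (p^{n+1} + p^n − 1)/p^{2n+1}. -/
/-- The multiple commutativity degree `d_n(G)`: the number of `(n+1)`-tuples of
pairwise commuting elements of `G`, divided by `|G|^(n+1)`. -/
noncomputable def multCommDegree (G : Type*) [Group G] (n : ℕ) : ℚ :=
  (Nat.card {f : Fin (n + 1) → G // ∀ i j, Commute (f i) (f j)} : ℚ) /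
    (Nat.card G : ℚ) ^ (n + 1)

/-!
Counting commuting `(m+1)`-tuples by their first entry `x` gives `c_{m+1}(G) = ∑ₓ c_m(C_G(x))`.
A central `x` contributes `c_m(G)`; otherwise `C_G(x)` is a proper subgroup, whose index is at
least `p`, so `x` contributes at most `(|G|/p)^m`. As `G/Z(G)` is not cyclic, `[G : Z(G)]` is not
prime, hence at least `p^2`. With `z = |Z(G)|/|G| ≤ 1/p^2` this gives
`d_{m+1} ≤ 1/p^{m+1} + z (d_m - 1/p^{m+1})`, and the bound follows by induction from `d_0 = 1`.
-/

open Subgroup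

abbrev CommTuple (G : Type*) [Mul G] (m : ℕ) : Type _ :=
  {f : Fin m → G // ∀ i j, Commute (f i) (f j)}

section SmallestPrimeDivisor

variable {G : Type*} [Group G] {p : ℕ}

lemma Subgroup.le_minFac_index (hmin : ∀ q : ℕ, q.Prime → q ∣ Nat.card G → p ≤ q)
    {H : Subgroup G} (hH : H ≠ ⊤) : p ≤ H.index.minFac :=
  hmin _ (Nat.minFac_prime (mt index_eq_one.1 hH)) (H.index.minFac_dvd.trans H.index_dvd_card)

lemma Subgroup.card_mul_le_of_ne_top [Finite G]
    (hmin : ∀ q : ℕ, q.Prime → q ∣ Nat.card G → p ≤ q) {H : Subgroup G} (hH : H ≠ ⊤) :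
    Nat.card H * p ≤ Nat.card G := by
  calc Nat.card H * p ≤ Nat.card H * H.index := by
        gcongr
        exact (H.le_minFac_index hmin hH).trans
          (Nat.minFac_le (Nat.pos_of_ne_zero index_ne_zero_of_finite))
    _ = Nat.card G := H.card_mul_index

lemma Subgroup.not_prime_index_center (hG : ¬IsMulCommutative G) : ¬(center G).index.Prime := by
  intro h
  have : Fact (center G).index.Prime := ⟨h⟩
  have : IsCyclic (G ⧸ center G) := isCyclic_of_prime_card (index_eq_card _).symm
  exact hG (isMulCommutative_of_isCyclic_quotient_center_self G)

lemma Subgroup.card_center_mul_sq_le [Finite G]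
    (hmin : ∀ q : ℕ, q.Prime → q ∣ Nat.card G → p ≤ q) (hG : ¬IsMulCommutative G) :
    Nat.card (center G) * p ^ 2 ≤ Nat.card G := by
  have hZ : center G ≠ ⊤ := mt center_eq_top_iff.1 hG
  calc Nat.card (center G) * p ^ 2 ≤ Nat.card (center G) * (center G).index := by
        gcongr
        exact (pow_le_pow_left' ((center G).le_minFac_index hmin hZ) 2).trans
          (Nat.minFac_sq_le_self (Nat.pos_of_ne_zero index_ne_zero_of_finite)
            (not_prime_index_center hG))
    _ = Nat.card G := (center G).card_mul_index

end SmallestPrimeDivisor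

namespace CommTuple

section Mul

variable {G H : Type*} [Mul G] [Mul H]

lemma card_one : Nat.card (CommTuple G 1) = Nat.card G :=
  Nat.card_congr <| (Equiv.subtypeUnivEquiv fun f i j => by rw [Subsingleton.elim i j]).trans
    (Equiv.funUnique _ _)

lemma card_le_pow [Finite G] (m : ℕ) : Nat.card (CommTuple G m) ≤ Nat.card G ^ m :=
  (Finite.card_subtype_le _).trans_eq (by rw [Nat.card_fun, Nat.card_fin])

lemma card_congr (e : G ≃* H) (m : ℕ) : Nat.card (CommTuple G m) = Nat.card (CommTuple H m) :=
  Nat.card_congr <| Equiv.subtypeEquiv (Equiv.arrowCongr (Equiv.refl _) e.toEquiv) fun f => by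
    simp [Commute, SemiconjBy, ← map_mul, e.injective.eq_iff]

end Mul

variable {G : Type*} [Group G]

def succEquiv (m : ℕ) : CommTuple G (m + 1) ≃ Σ x : G, CommTuple (centralizer {x}) m where
  toFun f := ⟨f.1 0, fun i => ⟨f.1 i.succ, mem_centralizer_singleton_iff.2 (f.2 i.succ 0)⟩,
    fun i j => Subtype.ext (f.2 i.succ j.succ)⟩
  invFun g := ⟨Fin.cons g.1 fun i => g.2.1 i, fun i j => by
    obtain ⟨x, g, hg⟩ := g
    cases i using Fin.cases <;> cases j using Fin.cases <;>
      simp only [Fin.cons_zero, Fin.cons_succ]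
    · exact Commute.refl x
    · exact (mem_centralizer_singleton_iff.1 (g _).2).symm
    · exact mem_centralizer_singleton_iff.1 (g _).2
    · exact congrArg Subtype.val (hg _ _)⟩
  left_inv f := Subtype.ext (Fin.cons_self_tail f.1)
  right_inv g := rfl

lemma card_succ [Fintype G] (m : ℕ) :
    Nat.card (CommTuple G (m + 1)) = ∑ x : G, Nat.card (CommTuple (centralizer {x}) m) := by
  rw [Nat.card_congr (succEquiv m), Nat.card_sigma]

lemma card_succ_le [Finite G] {p : ℕ} (hp : 0 < p)
    (hmin : ∀ q : ℕ, q.Prime → q ∣ Nat.card G → p ≤ q) (m : ℕ) :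
    (Nat.card (CommTuple G (m + 1)) : ℚ) ≤ Nat.card (center G) * Nat.card (CommTuple G m) +
      (Nat.card G - Nat.card (center G)) * (Nat.card G / p : ℚ) ^ m := by
  classical
  have := Fintype.ofFinite G
  have hcentral {x : G} (hx : x ∈ center G) :
      Nat.card (CommTuple (centralizer {x}) m) = Nat.card (CommTuple G m) := by
    rw [centralizer_eq_top_iff_subset.2 (Set.singleton_subset_iff.2 hx)]
    exact card_congr topEquiv m
  have hnoncentral {x : G} (hx : x ∉ center G) :
      (Nat.card (CommTuple (centralizer {x}) m) : ℚ) ≤ (Nat.card G / p : ℚ) ^ m := by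
    have hC : (Nat.card (centralizer {x}) : ℚ) ≤ Nat.card G / p := by
      rw [le_div_iff₀ (by exact_mod_cast hp)]
      exact_mod_cast (centralizer {x}).card_mul_le_of_ne_top hmin fun h =>
        hx (Set.singleton_subset_iff.1 (centralizer_eq_top_iff_subset.1 h))
    calc (Nat.card (CommTuple (centralizer {x}) m) : ℚ)
          ≤ (Nat.card (centralizer {x}) : ℚ) ^ m := by exact_mod_cast card_le_pow m
      _ ≤ _ := by gcongr
  rw [card_succ, Nat.cast_sum]
  calc ∑ x : G, (Nat.card (CommTuple (centralizer {x}) m) : ℚ)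
      ≤ ∑ x : G, if x ∈ center G then (Nat.card (CommTuple G m) : ℚ)
          else (Nat.card G / p : ℚ) ^ m := by
        gcongr with x
        split_ifs with hx
        · rw [hcentral hx]
        · exact hnoncentral hx
    _ = _ := by
        have hZ : (Finset.univ.filter (· ∈ center G)).card = Nat.card (center G) := by
          rw [Nat.card_eq_fintype_card, Fintype.card_subtype]
        have hsplit := Finset.card_filter_add_card_filter_not (s := Finset.univ) (· ∈ center G)
        rw [Finset.sum_ite, Finset.sum_const, Finset.sum_const, nsmul_eq_mul, nsmul_eq_mul,
          Nat.card_eq_fintype_card (α := G), ← Finset.card_univ, ← hsplit, hZ]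
        push_cast
        ring

end CommTuple

lemma multCommDegree_eq (G : Type*) [Group G] (n : ℕ) :
    multCommDegree G n = Nat.card (CommTuple G (n + 1)) / (Nat.card G : ℚ) ^ (n + 1) := rfl

section Degree

variable {G : Type*} [Group G] [Finite G]

lemma multCommDegree_zero : multCommDegree G 0 = 1 := by
  have : (Nat.card G : ℚ) ≠ 0 := by exact_mod_cast Nat.card_pos.ne'
  rw [multCommDegree_eq, CommTuple.card_one, pow_one, div_self this]

lemma multCommDegree_succ_le {p : ℕ} (hp : 0 < p)
    (hmin : ∀ q : ℕ, q.Prime → q ∣ Nat.card G → p ≤ q) (m : ℕ) :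
    multCommDegree G (m + 1) ≤ Nat.card (center G) / Nat.card G * multCommDegree G m +
      (1 - Nat.card (center G) / Nat.card G) / (p : ℚ) ^ (m + 1) := by
  have hN : (Nat.card G : ℚ) ≠ 0 := by exact_mod_cast Nat.card_pos.ne'
  have hp' : (p : ℚ) ≠ 0 := by exact_mod_cast hp.ne'
  calc multCommDegree G (m + 1)
      ≤ (Nat.card (center G) * Nat.card (CommTuple G (m + 1)) +
          (Nat.card G - Nat.card (center G)) * (Nat.card G / p : ℚ) ^ (m + 1)) /
          (Nat.card G : ℚ) ^ (m + 2) := by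
        rw [multCommDegree_eq]
        gcongr
        exact CommTuple.card_succ_le hp hmin (m + 1)
    _ = _ := by
        rw [multCommDegree_eq, div_pow]
        field_simp
        ring

end Degree

section Bound

variable {K : Type*} [Field K]

def multCommDegreeBound (p : K) (n : ℕ) : K := (p ^ (n + 1) + p ^ n - 1) / p ^ (2 * n + 1)

lemma multCommDegreeBound_zero {p : K} (hp : p ≠ 0) : multCommDegreeBound p 0 = 1 := by
  simp [multCommDegreeBound, hp]

lemma le_multCommDegreeBound_succ [LinearOrder K] [IsStrictOrderedRing K] {p z d d' : K}
    (m : ℕ) (hp : 1 ≤ p) (hz₀ : 0 ≤ z) (hz : z ≤ 1 / p ^ 2)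
    (hd' : d' ≤ z * d + (1 - z) / p ^ (m + 1))
    (hd : d ≤ multCommDegreeBound p m) : d' ≤ multCommDegreeBound p (m + 1) := by
  have hp₀ : p ≠ 0 := (zero_lt_one.trans_le hp).ne'
  have hgap : multCommDegreeBound p m - 1 / p ^ (m + 1) = (p ^ (m + 1) - 1) / p ^ (2 * m + 1) := by
    unfold multCommDegreeBound
    field_simp
    ring
  have hgap₀ : 0 ≤ (p ^ (m + 1) - 1) / p ^ (2 * m + 1) :=
    div_nonneg (sub_nonneg.2 (one_le_pow₀ hp)) (by positivity)
  calc d' ≤ 1 / p ^ (m + 1) + z * (d - 1 / p ^ (m + 1)) := by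
        linarith [show (1 - z) / p ^ (m + 1) = 1 / p ^ (m + 1) - z * (1 / p ^ (m + 1)) by ring]
    _ ≤ 1 / p ^ (m + 1) + z * ((p ^ (m + 1) - 1) / p ^ (2 * m + 1)) := by
        rw [← hgap]
        gcongr
    _ ≤ 1 / p ^ (m + 1) + 1 / p ^ 2 * ((p ^ (m + 1) - 1) / p ^ (2 * m + 1)) := by
        gcongr
    _ = multCommDegreeBound p (m + 1) := by
        unfold multCommDegreeBound
        field_simp
        ring

end Bound

theorem multCommDegree_le_of_nonabelian_general (G : Type*) [Group G] [Finite G]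
    (hna : ¬ ∀ a b : G, a * b = b * a)
    (p : ℕ) (hp : p.Prime)
    (hmin : ∀ q : ℕ, q.Prime → q ∣ Nat.card G → p ≤ q)
    (n : ℕ) :
    multCommDegree G n ≤ ((p : ℚ) ^ (n + 1) + (p : ℚ) ^ n - 1) / (p : ℚ) ^ (2 * n + 1) := by
  have hp₀ : (0 : ℚ) < p := by exact_mod_cast hp.pos
  have hN : (0 : ℚ) < Nat.card G := by exact_mod_cast Nat.card_pos
  have hZ : (Nat.card (center G) : ℚ) / Nat.card G ≤ 1 / (p : ℚ) ^ 2 := by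
    rw [div_le_div_iff₀ hN (by positivity), one_mul]
    exact_mod_cast card_center_mul_sq_le hmin (mt isMulCommutative_iff.1 hna)
  change multCommDegree G n ≤ multCommDegreeBound (p : ℚ) n
  induction n with
  | zero => rw [multCommDegree_zero, multCommDegreeBound_zero hp₀.ne']
  | succ m ih =>
    exact le_multCommDegreeBound_succ m (by exact_mod_cast hp.one_le) (by positivity) hZ
      (multCommDegree_succ_le hp.pos hmin m) ih

theorem multCommDegree_le_of_nonabelian (G : Type*) [Group G] [Finite G]
    (hna : ¬ ∀ a b : G, a * b = b * a)
    (p : ℕ) (hp : p.Prime) (hdvd : p ∣ Nat.card G)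
    (hmin : ∀ q : ℕ, q.Prime → q ∣ Nat.card G → p ≤ q)
    (n : ℕ) (hn : 1 ≤ n) :
    multCommDegree G n ≤ ((p : ℚ) ^ (n + 1) + (p : ℚ) ^ n - 1) / (p : ℚ) ^ (2 * n + 1) :=
  multCommDegree_le_of_nonabelian_general G hna p hp hmin n
end

section
/- Let G be a finite non-abelian group, let p be the smallest prime number dividing the order of G, and suppose Z(G) ∩ [G,G] = 1 (the center of G intersects the commutator subgroup of G trivially). Then for every natural number n, d_n(G) ≤ 1/p^n. -/
open Subgroup

theorem Nat.le_of_dvd_of_forall_prime_dvd_le {N p d : ℕ} (hN : N ≠ 0)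
    (hmin : ∀ q : ℕ, q.Prime → q ∣ N → p ≤ q) (hd : d ∣ N) (hd1 : d ≠ 1) : p ≤ d :=
  (hmin _ (minFac_prime hd1) ((minFac_dvd d).trans hd)).trans
    (minFac_le (pos_of_ne_zero (ne_zero_of_dvd_ne_zero hN hd)))

namespace Subgroup

variable {G : Type*} [Group G] {p : ℕ}

theorem le_relIndex_of_lt [Finite G] (hmin : ∀ q : ℕ, q.Prime → q ∣ Nat.card G → p ≤ q)
    {H K : Subgroup G} (hHK : H < K) : p ≤ H.relIndex K :=
  Nat.le_of_dvd_of_forall_prime_dvd_le Nat.card_pos.ne' hmin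
    ((H.relIndex_dvd_card K).trans K.card_subgroup_dvd_card)
    (fun h => hHK.not_ge (relIndex_eq_one.mp h))

theorem le_index_of_ne_top [Finite G] (hmin : ∀ q : ℕ, q.Prime → q ∣ Nat.card G → p ≤ q)
    {H : Subgroup G} (hH : H ≠ ⊤) : p ≤ H.index :=
  relIndex_top_right H ▸ le_relIndex_of_lt hmin (lt_top_iff_ne_top.mpr hH)

theorem mul_card_le_card_of_lt [Finite G] (hmin : ∀ q : ℕ, q.Prime → q ∣ Nat.card G → p ≤ q)
    {H K : Subgroup G} (hHK : H < K) : p * Nat.card H ≤ Nat.card K := by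
  rw [← relIndex_bot_left, ← relIndex_bot_left, ← relIndex_mul_relIndex ⊥ H K bot_le hHK.le,
    mul_comm]
  exact Nat.mul_le_mul_left _ (le_relIndex_of_lt hmin hHK)

theorem mul_card_le_card_of_ne_top [Finite G]
    (hmin : ∀ q : ℕ, q.Prime → q ∣ Nat.card G → p ≤ q)
    {H : Subgroup G} (hH : H ≠ ⊤) : p * Nat.card H ≤ Nat.card G :=
  card_top (G := G) ▸ mul_card_le_card_of_lt hmin (lt_top_iff_ne_top.mpr hH)

theorem commutator_le_of_index_eq (hp : p.Prime)
    (hmin : ∀ q : ℕ, q.Prime → q ∣ Nat.card G → p ≤ q)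
    {K : Subgroup G} (hK : K.index = p) : _root_.commutator G ≤ K := by
  have hpG : p ∣ Nat.card G := hK ▸ K.index_dvd_card
  have hG1 : Nat.card G ≠ 1 := fun h => hp.ne_one (Nat.dvd_one.mp (h ▸ hpG))
  have hminFac : (Nat.card G).minFac = p :=
    le_antisymm (Nat.minFac_le_of_dvd hp.two_le hpG)
      (hmin _ (Nat.minFac_prime hG1) (Nat.minFac_dvd _))
  have := normal_of_index_eq_minFac_card (hK.trans hminFac.symm)
  have := Fact.mk hp
  have := isCyclic_of_prime_card (index_eq_card K ▸ hK)
  exact Normal.quotient_commutative_iff_commutator_le.mp inferInstance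

theorem centralizer_commutator_ne_top (hna : ¬ ∀ a b : G, a * b = b * a)
    (hzc : center G ⊓ _root_.commutator G = ⊥) :
    centralizer (_root_.commutator G : Set G) ≠ ⊤ := by
  intro h
  rw [centralizer_eq_top_iff_subset, SetLike.coe_subset_coe] at h
  rw [inf_eq_right.mpr h, _root_.commutator_def, commutator_top_left_eq_bot_iff_le_center,
    top_le_iff] at hzc
  exact hna fun a b => mem_center_iff.mp (hzc ▸ mem_top b) a

theorem add_one_mul_card_centralizer_le [Finite G] (hp : p.Prime)
    (hmin : ∀ q : ℕ, q.Prime → q ∣ Nat.card G → p ≤ q) {x : G}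
    (hx : x ∉ centralizer (_root_.commutator G : Set G)) :
    (p + 1) * Nat.card (centralizer {x}) ≤ Nat.card G := by
  have hne_top : centralizer {x} ≠ ⊤ := by
    rw [Ne, centralizer_eq_top_iff_subset, Set.singleton_subset_iff]
    exact fun hxZ => hx (center_le_centralizer _ hxZ)
  have hle : p ≤ (centralizer {x}).index := le_index_of_ne_top hmin hne_top
  have hne : (centralizer {x}).index ≠ p := fun h => hx <| mem_centralizer_iff.mpr fun c hc =>
    mem_centralizer_singleton_iff.mp (commutator_le_of_index_eq hp hmin h hc)
  calc (p + 1) * Nat.card (centralizer {x})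
      ≤ (centralizer {x}).index * Nat.card (centralizer {x}) :=
        Nat.mul_le_mul_right _ (by omega)
    _ = Nat.card G := index_mul_card _

theorem mul_add_one_mul_card_center_le [Finite G] (hp : p.Prime)
    (hmin : ∀ q : ℕ, q.Prime → q ∣ Nat.card G → p ≤ q)
    (hna : ¬ ∀ a b : G, a * b = b * a) (hzc : center G ⊓ _root_.commutator G = ⊥) :
    p * (p + 1) * Nat.card (center G) ≤ Nat.card G := by
  obtain ⟨x, hx⟩ : ∃ x, x ∉ centralizer (_root_.commutator G : Set G) := by
    by_contra! h
    exact centralizer_commutator_ne_top hna hzc (eq_top_iff.mpr fun x _ => h x)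
  have hZx : center G < centralizer {x} := SetLike.lt_iff_le_and_exists.mpr
    ⟨center_le_centralizer _, x, mem_centralizer_singleton_iff.mpr rfl,
      fun hxZ => hx (center_le_centralizer _ hxZ)⟩
  calc p * (p + 1) * Nat.card (center G) = (p + 1) * (p * Nat.card (center G)) := by ring
    _ ≤ (p + 1) * Nat.card (centralizer {x}) :=
      Nat.mul_le_mul_left _ (mul_card_le_card_of_lt hmin hZx)
    _ ≤ Nat.card G := add_one_mul_card_centralizer_le hp hmin hx

end Subgroup

section CommutingPairs

variable {G : Type*} [Group G] {p : ℕ}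

theorem card_commute_eq_sum_card_centralizer [Fintype G] :
    Nat.card {xy : G × G // Commute xy.1 xy.2} = ∑ x : G, Nat.card (centralizer {x}) := by
  rw [Nat.card_congr (Equiv.subtypeProdEquivSigmaSubtype fun x y : G => Commute x y),
    Nat.card_sigma]
  exact Finset.sum_congr rfl fun x _ => Nat.card_congr <| Equiv.subtypeEquivRight fun y =>
    eq_comm.trans mem_centralizer_singleton_iff.symm

-- `p (p + 1) |C(x)| ≤ |G| (p + [x ∈ L] + (p² - 1) [x ∈ Z(G)])`, without the subtraction
theorem mul_add_one_mul_card_centralizer_add_le [Finite G] (hp : p.Prime)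
    (hmin : ∀ q : ℕ, q.Prime → q ∣ Nat.card G → p ≤ q) (x : G) [Decidable (x ∈ center G)]
    [Decidable (x ∈ centralizer (_root_.commutator G : Set G))] :
    p * (p + 1) * Nat.card (centralizer {x}) + (if x ∈ center G then Nat.card G else 0) ≤
      p * Nat.card G + (if x ∈ centralizer (_root_.commutator G : Set G) then Nat.card G else 0) +
        (if x ∈ center G then p * p * Nat.card G else 0) := by
  have hle : Nat.card (centralizer {x}) ≤ Nat.card G := card_le_card_group _
  by_cases hxZ : x ∈ center G
  · have hxL : x ∈ centralizer (_root_.commutator G : Set G) := center_le_centralizer _ hxZ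
    simp only [hxZ, hxL, if_true]
    nlinarith
  have hx_ne_top : centralizer {x} ≠ ⊤ := by
    rwa [Ne, centralizer_eq_top_iff_subset, Set.singleton_subset_iff]
  by_cases hxL : x ∈ centralizer (_root_.commutator G : Set G)
  · simp only [hxZ, hxL, if_true, if_false]
    nlinarith [mul_card_le_card_of_ne_top hmin hx_ne_top]
  · simp only [hxZ, hxL, if_false]
    nlinarith [add_one_mul_card_centralizer_le hp hmin hxL]

theorem mul_card_commute_le [Finite G] (hp : p.Prime)
    (hmin : ∀ q : ℕ, q.Prime → q ∣ Nat.card G → p ≤ q)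
    (hna : ¬ ∀ a b : G, a * b = b * a) (hzc : center G ⊓ _root_.commutator G = ⊥) :
    p * Nat.card {xy : G × G // Commute xy.1 xy.2} ≤ Nat.card G ^ 2 := by
  classical
  have := Fintype.ofFinite G
  -- replaces `decidableMemCenter`, whose `if`s `hcount` below could not evaluate
  have := Classical.decPred (· ∈ center G)
  have hL : p * Nat.card (centralizer (_root_.commutator G : Set G)) ≤ Nat.card G :=
    mul_card_le_card_of_ne_top hmin (centralizer_commutator_ne_top hna hzc)
  have hZ := mul_add_one_mul_card_center_le hp hmin hna hzc
  have hx (x : G) := mul_add_one_mul_card_centralizer_add_le hp hmin x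
  have hcount (H : Subgroup G) [DecidablePred (· ∈ H)] (c : ℕ) :
      ∑ x : G, (if x ∈ H then c else 0) = Nat.card H * c := by
    rw [← Finset.sum_filter, Finset.sum_const, smul_eq_mul, Nat.card_eq_fintype_card,
      Fintype.card_subtype]
  have hsum := Finset.sum_le_sum fun x (_ : x ∈ Finset.univ) => hx x
  simp only [Finset.sum_add_distrib, hcount, ← Finset.mul_sum, Finset.sum_const,
    Finset.card_univ, smul_eq_mul, ← Nat.card_eq_fintype_card] at hsum
  rw [card_commute_eq_sum_card_centralizer]
  obtain ⟨q, rfl⟩ : ∃ q, p = q + 1 := Nat.exists_eq_add_one.mpr hp.pos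
  have key : (q + 1) * (q + 2) * ((q + 1) * ∑ x : G, Nat.card (centralizer {x})) ≤
      (q + 1) * (q + 2) * Nat.card G ^ 2 := by
    nlinarith [Nat.mul_le_mul_left (q + 1) hsum, Nat.mul_le_mul_right (Nat.card G) hL,
      Nat.mul_le_mul_left q (Nat.mul_le_mul_right (Nat.card G) hZ)]
  exact Nat.le_of_mul_le_mul_left key (by positivity)

theorem mul_card_commute_subgroup_le [Finite G]
    (hmin : ∀ q : ℕ, q.Prime → q ∣ Nat.card G → p ≤ q)
    (hcp : p * Nat.card {xy : G × G // Commute xy.1 xy.2} ≤ Nat.card G ^ 2) (K : Subgroup G) :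
    p * Nat.card {xy : K × K // Commute xy.1 xy.2} ≤ Nat.card G * Nat.card K := by
  rcases eq_or_ne K ⊤ with rfl | hK
  · have e : {xy : (⊤ : Subgroup G) × (⊤ : Subgroup G) // Commute xy.1 xy.2} ≃
        {xy : G × G // Commute xy.1 xy.2} :=
      Equiv.subtypeEquiv (topEquiv.toEquiv.prodCongr topEquiv.toEquiv) fun _ => Subtype.ext_iff
    rwa [Nat.card_congr e, card_top, ← sq]
  · calc p * Nat.card {xy : K × K // Commute xy.1 xy.2}
        ≤ p * Nat.card (K × K) := Nat.mul_le_mul_left _ (Finite.card_subtype_le _)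
      _ = p * Nat.card K * Nat.card K := by rw [Nat.card_prod, mul_assoc]
      _ ≤ Nat.card G * Nat.card K := Nat.mul_le_mul_right _ (mul_card_le_card_of_ne_top hmin hK)

end CommutingPairs

abbrev CommutingTuples (G : Type*) [Group G] (k : ℕ) :=
  {f : Fin k → G // ∀ i j, Commute (f i) (f j)}

namespace CommutingTuples

variable {G : Type*} [Group G]

theorem forall_commute_cons_iff {k : ℕ} (x : G) (t : Fin k → G) :
    (∀ i j, Commute ((Fin.cons x t : Fin (k + 1) → G) i) ((Fin.cons x t : Fin (k + 1) → G) j)) ↔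
      x ∈ centralizer (Set.range t) ∧ ∀ i j, Commute (t i) (t j) := by
  simp only [Fin.forall_fin_succ, Fin.cons_zero, Fin.cons_succ, mem_centralizer_iff,
    Set.forall_mem_range]
  exact ⟨fun h => ⟨fun i => (h.2 i).1.eq, fun i j => (h.2 i).2 j⟩,
    fun h => ⟨⟨Commute.refl x, fun j => ((h.1 j).symm : Commute x (t j))⟩,
      fun i => ⟨(h.1 i : Commute (t i) x), h.2 i⟩⟩⟩

theorem forall_commute_cons_cons_iff {k : ℕ} (x y : G) (t : Fin k → G) :
    (∀ i j, Commute ((Fin.cons x (Fin.cons y t) : Fin (k + 2) → G) i)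
      ((Fin.cons x (Fin.cons y t) : Fin (k + 2) → G) j)) ↔
      (x ∈ centralizer (Set.range t) ∧ y ∈ centralizer (Set.range t) ∧ Commute x y) ∧
        ∀ i j, Commute (t i) (t j) := by
  rw [forall_commute_cons_iff, forall_commute_cons_iff, Fin.range_cons, mem_centralizer_iff,
    Set.forall_mem_insert, ← mem_centralizer_iff]
  exact ⟨fun ⟨⟨hyx, hx⟩, hy, ht⟩ => ⟨⟨hx, hy, hyx.symm⟩, ht⟩,
    fun ⟨⟨hx, hy, hxy⟩, ht⟩ => ⟨⟨hxy.symm.eq, hx⟩, hy, ht⟩⟩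

def consEquiv (k : ℕ) :
    CommutingTuples G (k + 1) ≃ Σ t : CommutingTuples G k, centralizer (Set.range t.1) where
  toFun f :=
    have h := (forall_commute_cons_iff (f.1 0) (Fin.tail f.1)).mp
      (by rw [Fin.cons_self_tail]; exact f.2)
    ⟨⟨Fin.tail f.1, h.2⟩, ⟨f.1 0, h.1⟩⟩
  invFun s := ⟨Fin.cons s.2.1 s.1.1, (forall_commute_cons_iff _ _).mpr ⟨s.2.2, s.1.2⟩⟩
  left_inv f := Subtype.ext (Fin.cons_self_tail f.1)
  right_inv s := rfl

def consConsEquiv (k : ℕ) :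
    CommutingTuples G (k + 2) ≃ Σ t : CommutingTuples G k,
      {xy : centralizer (Set.range t.1) × centralizer (Set.range t.1) // Commute xy.1 xy.2} where
  toFun f :=
    have h := (forall_commute_cons_cons_iff (f.1 0) (f.1 1) (Fin.tail (Fin.tail f.1))).mp
      (by rw [show f.1 1 = Fin.tail f.1 0 from rfl, Fin.cons_self_tail, Fin.cons_self_tail];
          exact f.2)
    ⟨⟨Fin.tail (Fin.tail f.1), h.2⟩, ⟨⟨f.1 0, h.1.1⟩, ⟨f.1 1, h.1.2.1⟩⟩, Subtype.ext h.1.2.2⟩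
  invFun s := ⟨Fin.cons s.2.1.1 (Fin.cons s.2.1.2 s.1.1), (forall_commute_cons_cons_iff _ _ _).mpr
    ⟨⟨s.2.1.1.2, s.2.1.2.2, congrArg Subtype.val s.2.2.eq⟩, s.1.2⟩⟩
  left_inv f := Subtype.ext <| show Fin.cons (f.1 0) (Fin.cons (Fin.tail f.1 0) _) = f.1 by
    rw [Fin.cons_self_tail, Fin.cons_self_tail]
  right_inv s := rfl

variable [Finite G] {p : ℕ}

theorem mul_card_succ_succ_le (hmin : ∀ q : ℕ, q.Prime → q ∣ Nat.card G → p ≤ q)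
    (hcp : p * Nat.card {xy : G × G // Commute xy.1 xy.2} ≤ Nat.card G ^ 2) (k : ℕ) :
    p * Nat.card (CommutingTuples G (k + 2)) ≤
      Nat.card G * Nat.card (CommutingTuples G (k + 1)) := by
  have := Fintype.ofFinite (CommutingTuples G k)
  rw [Nat.card_congr (consConsEquiv k), Nat.card_congr (consEquiv k), Nat.card_sigma,
    Nat.card_sigma, Finset.mul_sum, Finset.mul_sum]
  exact Finset.sum_le_sum fun t _ => mul_card_commute_subgroup_le hmin hcp _

theorem pow_mul_card_succ_le (hmin : ∀ q : ℕ, q.Prime → q ∣ Nat.card G → p ≤ q)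
    (hcp : p * Nat.card {xy : G × G // Commute xy.1 xy.2} ≤ Nat.card G ^ 2) :
    ∀ n : ℕ, p ^ n * Nat.card (CommutingTuples G (n + 1)) ≤ Nat.card G ^ (n + 1)
  | 0 => by
    rw [pow_zero, one_mul, pow_one]
    exact Nat.card_le_card_of_injective (fun f => f.1 0) fun f g h =>
      Subtype.ext (funext fun i => by rwa [Fin.fin_one_eq_zero i])
  | n + 1 =>
    calc p ^ (n + 1) * Nat.card (CommutingTuples G (n + 2))
        = p ^ n * (p * Nat.card (CommutingTuples G (n + 2))) := by ring
      _ ≤ p ^ n * (Nat.card G * Nat.card (CommutingTuples G (n + 1))) :=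
        Nat.mul_le_mul_left _ (mul_card_succ_succ_le hmin hcp n)
      _ = Nat.card G * (p ^ n * Nat.card (CommutingTuples G (n + 1))) := by ring
      _ ≤ Nat.card G * Nat.card G ^ (n + 1) :=
        Nat.mul_le_mul_left _ (pow_mul_card_succ_le hmin hcp n)
      _ = Nat.card G ^ (n + 2) := by ring

end CommutingTuples

theorem multCommDegree_le_of_center_inf_commutator_eq_bot_general (G : Type*) [Group G] [Finite G]
    (hna : ¬ ∀ a b : G, a * b = b * a)
    (p : ℕ) (hp : p.Prime)
    (hmin : ∀ q : ℕ, q.Prime → q ∣ Nat.card G → p ≤ q)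
    (hzc : Subgroup.center G ⊓ commutator G = ⊥) (n : ℕ) :
    multCommDegree G n ≤ 1 / (p : ℚ) ^ n := by
  have hcount := CommutingTuples.pow_mul_card_succ_le hmin (mul_card_commute_le hp hmin hna hzc) n
  have hG : (0 : ℚ) < Nat.card G := by exact_mod_cast Nat.card_pos
  have hp0 : (0 : ℚ) < p := by exact_mod_cast hp.pos
  rw [multCommDegree, div_le_div_iff₀ (by positivity) (by positivity), one_mul, mul_comm]
  exact_mod_cast hcount

theorem multCommDegree_le_of_center_inf_commutator_eq_bot (G : Type*) [Group G] [Finite G]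
    (hna : ¬ ∀ a b : G, a * b = b * a)
    (p : ℕ) (hp : p.Prime) (hdvd : p ∣ Nat.card G)
    (hmin : ∀ q : ℕ, q.Prime → q ∣ Nat.card G → p ≤ q)
    (hzc : Subgroup.center G ⊓ commutator G = ⊥) (n : ℕ) :
    multCommDegree G n ≤ 1 / (p : ℚ) ^ n :=
  multCommDegree_le_of_center_inf_commutator_eq_bot_general G hna p hp hmin hzc n
end
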